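/- arXiv:2310.10309 — 2 statements merged into one kernel-verified Lean document; each statement's English description precedes it below -/
import Mathlib

section
/- Let T be a rooted tree and ≈ an equivalence relation on its nodes whose classes are connected subtrees. If every infinite branch of T is eventually contained in a single ≈-class (i.e., has a tail all of whose nodes are pairwise ≈-equivalent), then the quotient tree T/≈ is well-founded (has no infinite branch). -/
/-!
Lift an infinite branch `c₀, c₁, …` of the quotient to `T`: pick an edge `xₖ — yₖ` of `T` from
class `cₖ` to class `cₖ₊₁`, and join `yₖ₋₁` to `xₖ` by a path inside the connected class `cₖ`.
Concatenating these paths gives a branch of `T` (its vertices are distinct, since the `cₖ` are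
distinct classes and each path is simple) that meets every class `cₖ`, so no tail of it lies in a
single class.
-/

open Function

namespace List

variable {α : Type*} (l : ℕ → List α)

def flattenUpTo : ℕ → List α
  | 0 => []
  | k + 1 => flattenUpTo k ++ l k

theorem flattenUpTo_isPrefix_of_le {k k' : ℕ} (h : k ≤ k') :
    flattenUpTo l k <+: flattenUpTo l k' := by
  induction k', h using Nat.le_induction with
  | base => exact prefix_refl _
  | succ k' _ ih => exact ih.trans (prefix_append _ _)

theorem mem_flattenUpTo {k : ℕ} {x : α} : x ∈ flattenUpTo l k ↔ ∃ j < k, x ∈ l j := by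
  induction k with
  | zero => simp [flattenUpTo]
  | succ k ih =>
    simp only [flattenUpTo, mem_append, ih, Nat.lt_succ_iff_lt_or_eq]
    grind

variable {l}

theorem le_length_flattenUpTo (hne : ∀ k, l k ≠ []) (k : ℕ) : k ≤ (flattenUpTo l k).length := by
  induction k with
  | zero => exact le_rfl
  | succ k ih =>
    simp only [flattenUpTo, length_append]
    have := length_pos_iff.mpr (hne k)
    omega

theorem nodup_flattenUpTo (hnodup : ∀ k, (l k).Nodup)
    (hdisj : _root_.Pairwise (List.Disjoint on l)) (k : ℕ) :
    (flattenUpTo l k).Nodup := by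
  induction k with
  | zero => exact nodup_nil
  | succ k ih =>
    refine nodup_append.mpr ⟨ih, hnodup k, ?_⟩
    rintro x hx _ hy rfl
    obtain ⟨j, hj, hxj⟩ := (mem_flattenUpTo l).mp hx
    exact hdisj hj.ne hxj hy

theorem isChain_flattenUpTo {R : α → α → Prop} (hne : ∀ k, l k ≠ [])
    (hchain : ∀ k, (l k).IsChain R)
    (hlink : ∀ k, ∀ x ∈ (l k).getLast?, ∀ y ∈ (l (k + 1)).head?, R x y) (k : ℕ) :
    (flattenUpTo l k).IsChain R := by
  induction k with
  | zero => exact .nil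
  | succ k ih =>
    refine isChain_append.mpr ⟨ih, hchain k, ?_⟩
    cases k with
    | zero => simp [flattenUpTo]
    | succ k =>
      simpa only [flattenUpTo, getLast?_append_of_ne_nil _ (hne k)] using hlink k

theorem exists_seq_getElem_flattenUpTo (hne : ∀ k, l k ≠ []) :
    ∃ b : ℕ → α, ∀ k i (hi : i < (flattenUpTo l k).length), (flattenUpTo l k)[i] = b i := by
  refine ⟨fun i => (flattenUpTo l (i + 1))[i]'(le_length_flattenUpTo hne (i + 1)), fun k i hi => ?_⟩
  rcases le_total k (i + 1) with h | h
  · exact (flattenUpTo_isPrefix_of_le l h).getElem hi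
  · exact ((flattenUpTo_isPrefix_of_le l h).getElem _).symm

theorem exists_injective_seq_of_isChain_segments {R : α → α → Prop} (hne : ∀ k, l k ≠ [])
    (hnodup : ∀ k, (l k).Nodup) (hdisj : _root_.Pairwise (List.Disjoint on l))
    (hchain : ∀ k, (l k).IsChain R)
    (hlink : ∀ k, ∀ x ∈ (l k).getLast?, ∀ y ∈ (l (k + 1)).head?, R x y) :
    ∃ b : ℕ → α, Injective b ∧ (∀ i, R (b i) (b (i + 1))) ∧ ∀ k, ∃ i, b i ∈ l k := by
  obtain ⟨b, hb⟩ := exists_seq_getElem_flattenUpTo hne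
  have hlen := le_length_flattenUpTo hne
  refine ⟨b, fun i j hij => ?_, fun i => ?_, fun k => ?_⟩
  · have hi : i < (flattenUpTo l (i + j + 1)).length := by grind
    have hj : j < (flattenUpTo l (i + j + 1)).length := by grind
    rw [← hb _ i hi, ← hb _ j hj] at hij
    exact ((nodup_flattenUpTo hnodup hdisj _).getElem_inj_iff).mp hij
  · have hi : i + 1 < (flattenUpTo l (i + 2)).length := by grind
    rw [← hb (i + 2) i (by omega), ← hb _ (i + 1) hi]
    exact isChain_iff_getElem.mp (isChain_flattenUpTo hne hchain hlink _) i hi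
  · obtain ⟨x, hx⟩ := exists_mem_of_ne_nil _ (hne k)
    obtain ⟨i, hi, rfl⟩ := mem_iff_getElem.mp ((mem_flattenUpTo l).mpr ⟨k, k.lt_succ_self, hx⟩)
    exact ⟨i, hb _ i hi ▸ hx⟩

end List

namespace SimpleGraph

variable {V : Type*} {G : SimpleGraph V}

theorem exists_isPath_of_induce_connected {S : Set V} (hS : (G.induce S).Connected) {u v : V}
    (hu : u ∈ S) (hv : v ∈ S) : ∃ p : G.Walk u v, p.IsPath ∧ ∀ w ∈ p.support, w ∈ S := by
  classical
  obtain ⟨q, hq⟩ := (hS.preconnected ⟨u, hu⟩ ⟨v, hv⟩).some.toPath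
  let f : G.induce S ↪g G := Embedding.induce S
  have hsupp : ∀ w ∈ (q.map f.toHom).support, w ∈ S := by
    simp only [Walk.support_map, List.mem_map]
    rintro _ ⟨w, -, rfl⟩
    exact w.property
  exact ⟨q.map f.toHom, hq.map f.injective, hsupp⟩

theorem Walk.head?_support {u v : V} (p : G.Walk u v) : p.support.head? = some u := by
  rw [← p.cons_tail_support]; rfl

theorem Walk.getLast?_support {u v : V} (p : G.Walk u v) : p.support.getLast? = some v := by
  rw [List.getLast?_eq_some_getLast p.support_ne_nil, p.getLast_support]

theorem exists_segments_of_quotient_path (s : Setoid V)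
    (hconn : ∀ v : V, (G.induce {w | s.r v w}).Connected) (c : ℕ → Quotient s)
    (hc : ∀ i, ∃ x y, Quotient.mk s x = c i ∧ Quotient.mk s y = c (i + 1) ∧ G.Adj x y) :
    ∃ l : ℕ → List V, (∀ k, l k ≠ []) ∧ (∀ k, (l k).Nodup) ∧ (∀ k, (l k).IsChain G.Adj) ∧
      (∀ k, ∀ w ∈ l k, Quotient.mk s w = c k) ∧
      ∀ k, ∀ x ∈ (l k).getLast?, ∀ y ∈ (l (k + 1)).head?, G.Adj x y := by
  choose x y hx hy hxy using hc
  -- the lifted walk enters the class `c k` at `entry k` and leaves it at `x k`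
  let entry : ℕ → V := fun k => Nat.casesOn k (x 0) y
  have hentry : ∀ k, Quotient.mk s (entry k) = c k := by
    rintro (_ | k)
    exacts [hx 0, hy k]
  have hpath : ∀ k, ∃ p : G.Walk (entry k) (x k), p.IsPath ∧ ∀ w ∈ p.support, s.r (entry k) w :=
    fun k => exists_isPath_of_induce_connected (hconn (entry k)) (s.refl _)
      (Quotient.exact ((hentry k).trans (hx k).symm))
  choose p hp_path hp_class using hpath
  refine ⟨fun k => (p k).support, fun k => (p k).support_ne_nil,
    fun k => (hp_path k).support_nodup, fun k => (p k).isChain_adj_support,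
    fun k w hw => (Quotient.sound (hp_class k w hw)).symm.trans (hentry k), ?_⟩
  intro k a ha b hb
  rw [Walk.getLast?_support, Option.mem_some_iff] at ha
  rw [Walk.head?_support, Option.mem_some_iff] at hb
  rw [← ha, ← hb]
  exact hxy k

end SimpleGraph

theorem Set.finite_range_of_eventually_eq {β : Type*} {f : ℕ → β} {N : ℕ}
    (hN : ∀ i ≥ N, f i = f N) : (Set.range f).Finite := by
  refine ((Set.finite_Iic N).image f).subset ?_
  rintro _ ⟨i, rfl⟩
  rcases le_total i N with h | h
  exacts [⟨i, h, rfl⟩, ⟨N, Set.mem_Iic.mpr le_rfl, (hN i h).symm⟩]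

theorem quotient_tree_well_founded_general {V : Type*} (G : SimpleGraph V)
    (s : Setoid V)
    (hconn : ∀ v : V, (G.induce {w | s.r v w}).Connected)
    (htail : ∀ b : ℕ → V, Function.Injective b → (∀ i, G.Adj (b i) (b (i + 1))) →
      ∃ N, ∀ i ≥ N, ∀ j ≥ N, s.r (b i) (b j)) :
    ¬ ∃ c : ℕ → Quotient s, Function.Injective c ∧
      ∀ i, (SimpleGraph.fromRel (fun c₁ c₂ : Quotient s =>
        ∃ a b : V, Quotient.mk s a = c₁ ∧ Quotient.mk s b = c₂ ∧ G.Adj a b)).Adj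
        (c i) (c (i + 1)) := by
  rintro ⟨c, hc_inj, hc_adj⟩
  have hedge : ∀ i, ∃ x y, Quotient.mk s x = c i ∧ Quotient.mk s y = c (i + 1) ∧ G.Adj x y := by
    intro i
    obtain ⟨-, h | ⟨x, y, hx, hy, hxy⟩⟩ := hc_adj i
    exacts [h, ⟨y, x, hy, hx, hxy.symm⟩]
  obtain ⟨l, hne, hnodup, hchain, hclass, hlink⟩ :=
    G.exists_segments_of_quotient_path s hconn c hedge
  have hdisj : Pairwise (List.Disjoint on l) := fun i j hij x hi hj =>
    hij (hc_inj ((hclass i x hi).symm.trans (hclass j x hj)))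
  obtain ⟨b, hb_inj, hb_adj, hb_meets⟩ :=
    List.exists_injective_seq_of_isChain_segments hne hnodup hdisj hchain hlink
  obtain ⟨N, hN⟩ := htail b hb_inj hb_adj
  have hb_finite : (Set.range fun i => Quotient.mk s (b i)).Finite :=
    Set.finite_range_of_eventually_eq fun i hi => Quotient.sound (hN i hi N le_rfl)
  refine Set.infinite_range_of_injective hc_inj (hb_finite.subset ?_)
  rintro _ ⟨k, rfl⟩
  obtain ⟨i, hi⟩ := hb_meets k
  exact ⟨i, hclass k _ hi⟩

/-- If every infinite branch of a tree is eventually contained in a single class of an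
equivalence relation with connected classes, then the quotient tree has no infinite
branch (it is well-founded). -/
theorem quotient_tree_well_founded {V : Type*} (G : SimpleGraph V) (hG : G.IsTree)
    (s : Setoid V)
    (hconn : ∀ v : V, (G.induce {w | s.r v w}).Connected)
    (htail : ∀ b : ℕ → V, Function.Injective b → (∀ i, G.Adj (b i) (b (i + 1))) →
      ∃ N, ∀ i ≥ N, ∀ j ≥ N, s.r (b i) (b j)) :
    ¬ ∃ c : ℕ → Quotient s, Function.Injective c ∧
      ∀ i, (SimpleGraph.fromRel (fun c₁ c₂ : Quotient s =>
        ∃ a b : V, Quotient.mk s a = c₁ ∧ Quotient.mk s b = c₂ ∧ G.Adj a b)).Adj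
        (c i) (c (i + 1)) :=
  quotient_tree_well_founded_general G s hconn htail
end

section
/- Let (W, R) be a Kripke frame with R⁺ the transitive closure of R. If at every world the formula A → ◻A holds (globally) and at world w the formula ◻A holds, then ◻⁺A holds at w. That is, the induction axiom ◻A ∧ ◻⁺(A → ◻A) → ◻⁺A is valid on all frames (W, R, R⁺) where R⁺ is the transitive closure of R. -/
/-- Validity of the induction axiom `◻A ∧ ◻⁺(A → ◻A) → ◻⁺A` on all frames where
`◻⁺` is interpreted by the transitive closure of `R`. -/
theorem induction_axiom_valid {W : Type*} (R : W → W → Prop) (A : Set W) (w : W)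
    (hbox : ∀ v, R w v → v ∈ A)
    (hind : ∀ v, Relation.TransGen R w v → (v ∈ A → ∀ u, R v u → u ∈ A)) :
    ∀ v, Relation.TransGen R w v → v ∈ A := by
  intro v hv
  induction hv with
  | single h => exact hbox _ h
  | tail h h' ih => exact hind _ h (ih) _ h'
end
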